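/- arXiv:1603.06822 — 3 statements merged into one kernel-verified Lean document; each statement's English description precedes it below -/
import Mathlib

section
/- Let L be a matroid, x a non-loop element of L, and B a basis of L \ x. Let C be the unique circuit of L with x ∈ C ⊆ B ∪ {x}. If |C| ≥ 3 and w : E(L) → ℝ≥0 is a weight function, and y is a minimum-weight element of C − {x}, then B − {y} is a basis of L / x and w(B − {y}) ≥ (1/2)·w(B). -/
open Set

namespace MatroidSecretary

variable {α : Type*}

/-- The rank of a set in a matroid: the maximum size of an independent subset. -/
noncomputable def rk (M : Matroid α) (X : Set α) : ℕ :=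
  sSup {n | ∃ I, M.Indep I ∧ I ⊆ X ∧ I.ncard = n}

/-- The local connectivity `⊓_M(X,Y) = r(X) + r(Y) - r(X ∪ Y)` (as an integer). -/
noncomputable def econn (M : Matroid α) (X Y : Set α) : ℤ :=
  (rk M X : ℤ) + rk M Y - rk M (X ∪ Y)

/-- The connectivity function `λ_M(X) = r(X) + r(E \ X) - r(E)` (as an integer). -/
noncomputable def lambda (M : Matroid α) (X : Set α) : ℤ :=
  (rk M X : ℤ) + rk M (M.E \ X) - rk M M.E

/-- Contraction `M / C`, defined by duality: `M / C = (M✶ \ C)✶`. -/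
noncomputable def contract (M : Matroid α) (C : Set α) : Matroid α :=
  Matroid.dual (Matroid.restrict (Matroid.dual M) (M.E \ C))

/-- Deletion `M \ D`, i.e. restriction to the complement. -/
noncomputable def delete (M : Matroid α) (D : Set α) : Matroid α :=
  Matroid.restrict M (M.E \ D)

/-- A circuit: a dependent set all of whose proper subsets are independent. -/
def Circuit (M : Matroid α) (C : Set α) : Prop :=
  M.Dep C ∧ ∀ x ∈ C, M.Indep (C \ {x})

/-- A loop of a matroid. -/
def IsLoop (M : Matroid α) (e : α) : Prop := e ∈ M.E ∧ ¬ M.Indep {e}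

/-- The total weight of a set of elements. -/
noncomputable def wt (w : α → ℝ) (S : Set α) : ℝ := ∑ᶠ e ∈ S, w e

/-- The maximum weight of an independent set of `M`. -/
noncomputable def opt (M : Matroid α) (w : α → ℝ) : ℝ :=
  sSup {t | ∃ I, M.Indep I ∧ wt w I = t}

end MatroidSecretary

namespace Matroid

variable {α : Type*} {M : Matroid α} {B C I : Set α} {x y : α}

lemma IsBasis.isBase_of_mem_closure (hB : M.IsBasis B (M.E \ {x})) (hx : x ∈ M.closure B) :
    M.IsBase B := by
  refine isBasis_ground_iff.1 <| isBasis_iff_indep_closure.2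
    ⟨hB.indep, fun e he ↦ ?_, hB.indep.subset_ground⟩
  obtain rfl | hex := eq_or_ne e x
  · exact hx
  · exact hB.subset_closure ⟨he, hex⟩

lemma IsCircuit.mem_closure_of_subset_insert (hC : M.IsCircuit C) (hxC : x ∈ C)
    (hCI : C ⊆ insert x I) : x ∈ M.closure I :=
  M.closure_subset_closure (sdiff_singleton_subset_iff.2 hCI)
    (hC.mem_closure_sdiff_singleton_of_mem hxC)

/-- `C` is the fundamental circuit of `x` with respect to `I`, whose members are exactly the
elements that can be exchanged for `x`. -/
lemma IsCircuit.indep_insert_sdiff_singleton (hC : M.IsCircuit C) (hI : M.Indep I)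
    (hxC : x ∈ C) (hCI : C ⊆ insert x I) (hyC : y ∈ C) : M.Indep (insert x I \ {y}) := by
  have hxI : x ∉ I := fun hxI ↦ hC.not_indep (hI.subset (hCI.trans (insert_subset hxI le_rfl)))
  rw [← hI.mem_fundCircuit_iff (hC.mem_closure_of_subset_insert hxC hCI) hxI,
    ← hC.eq_fundCircuit_of_subset hI hCI]
  exact hyC

lemma IsBase.exchange_isBase_of_isCircuit (hB : M.IsBase B) (hC : M.IsCircuit C) (hxC : x ∈ C)
    (hCB : C ⊆ insert x B) (hxB : x ∉ B) (hyC : y ∈ C) (hyx : y ≠ x) :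
    M.IsBase (insert x (B \ {y})) := by
  refine hB.exchange_isBase_of_indep hxB ?_
  rw [insert_sdiff_singleton_comm hyx.symm]
  exact hC.indep_insert_sdiff_singleton hB.indep hxC hCB hyC

lemma IsBase.contract_singleton_isBase (hB : M.IsBase (insert x I)) (hxI : x ∉ I) :
    (M ／ {x}).IsBase I := by
  rw [(hB.indep.subset (singleton_subset_iff.2 (mem_insert x I))).contract_isBase_iff,
    union_singleton]
  exact ⟨hB, disjoint_singleton_right.2 hxI⟩

end Matroid

namespace MatroidSecretary

open Matroid

variable {α : Type*}

lemma circuit_iff_isCircuit {M : Matroid α} {C : Set α} : Circuit M C ↔ M.IsCircuit C :=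
  isCircuit_iff_dep_forall_sdiff_singleton_indep.symm

lemma delete_eq_delete (M : Matroid α) (D : Set α) : delete M D = M ＼ D := rfl

lemma contract_eq_contract (M : Matroid α) (C : Set α) : contract M C = M ／ C := rfl

section Weight

variable {w : α → ℝ} {S : Set α} {y z : α}

lemma wt_nonneg (hw : ∀ e, 0 ≤ w e) (S : Set α) : 0 ≤ wt w S :=
  finsum_nonneg fun e ↦ finsum_nonneg fun _ ↦ hw e

lemma wt_eq_add_wt_sdiff_singleton (hS : S.Finite) (hy : y ∈ S) :
    wt w S = w y + wt w (S \ {y}) :=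
  calc wt w S = wt w (insert y (S \ {y})) := by rw [insert_sdiff_singleton, insert_eq_of_mem hy]
    _ = w y + wt w (S \ {y}) := finsum_mem_insert w (fun h ↦ h.2 rfl) hS.sdiff

lemma le_wt_of_mem (hw : ∀ e, 0 ≤ w e) (hS : S.Finite) (hz : z ∈ S) : w z ≤ wt w S := by
  rw [wt_eq_add_wt_sdiff_singleton hS hz]
  exact le_add_of_nonneg_right (wt_nonneg hw _)

/-- An element at least as heavy as `y` stays behind, so `y` carries at most half the weight. -/
lemma wt_div_two_le_wt_sdiff_singleton (hw : ∀ e, 0 ≤ w e) (hS : S.Finite) (hy : y ∈ S)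
    (hz : z ∈ S) (hzy : z ≠ y) (hyz : w y ≤ w z) : wt w S / 2 ≤ wt w (S \ {y}) := by
  have hz' : w z ≤ wt w (S \ {y}) := le_wt_of_mem hw hS.sdiff ⟨hz, hzy⟩
  linarith [wt_eq_add_wt_sdiff_singleton (w := w) hS hy]

end Weight

theorem basis_of_contract_of_big_circuit_general (L : Matroid α) [L.Finite] (x : α) (B C : Set α)
    (hB : (delete L {x}).IsBase B)
    (hC : Circuit L C) (hxC : x ∈ C) (hCB : C ⊆ insert x B) (hCcard : 3 ≤ C.ncard)
    (w : α → ℝ) (hw : ∀ e, 0 ≤ w e)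
    (y : α) (hy : y ∈ C \ {x}) (hymin : ∀ z ∈ C \ {x}, w y ≤ w z) :
    (contract L {x}).IsBase (B \ {y}) ∧ wt w B / 2 ≤ wt w (B \ {y}) := by
  rw [circuit_iff_isCircuit] at hC
  rw [delete_eq_delete, delete_isBase_iff] at hB
  rw [contract_eq_contract]
  have hxB : x ∉ B := fun h ↦ (hB.subset h).2 rfl
  have hCxB : C \ {x} ⊆ B := sdiff_singleton_subset_iff.2 hCB
  have hLB : L.IsBase B := hB.isBase_of_mem_closure (hC.mem_closure_of_subset_insert hxC hCB)
  refine ⟨?_, ?_⟩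
  · exact (hLB.exchange_isBase_of_isCircuit hC hxC hCB hxB hy.1 hy.2).contract_singleton_isBase
      fun h ↦ hxB h.1
  · obtain ⟨z, hz, hzy⟩ := exists_ne_of_one_lt_ncard (by
      rw [ncard_sdiff_singleton_of_mem hxC]; omega) y
    exact wt_div_two_le_wt_sdiff_singleton hw (L.set_finite B hLB.subset_ground) (hCxB hy)
      (hCxB hz) hzy (hymin z hz)

/-- if `B` is a basis of `L \ x`, `C` is the fundamental circuit of the
non-loop `x` with respect to `B`, `|C| ≥ 3`, and `y` is a minimum-weight element of
`C \ {x}`, then `B \ {y}` is a basis of `L / x` of weight at least `w(B)/2`. -/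
theorem basis_of_contract_of_big_circuit (L : Matroid α) [L.Finite] (x : α) (B C : Set α)
    (hx : x ∈ L.E) (hxnl : L.Indep {x})
    (hB : (delete L {x}).IsBase B)
    (hC : Circuit L C) (hxC : x ∈ C) (hCB : C ⊆ insert x B) (hCcard : 3 ≤ C.ncard)
    (w : α → ℝ) (hw : ∀ e, 0 ≤ w e)
    (y : α) (hy : y ∈ C \ {x}) (hymin : ∀ z ∈ C \ {x}, w y ≤ w z) :
    (contract L {x}).IsBase (B \ {y}) ∧ wt w B / 2 ≤ wt w (B \ {y}) :=
  basis_of_contract_of_big_circuit_general L x B C hB hC hxC hCB hCcard w hw y hy hymin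
end MatroidSecretary
end

section
/- Let L be a matroid, x a non-loop of L, w : E(L) → ℝ≥0, and let opt(N,w) denote the maximum weight of a basis of a matroid N. Then for any basis B of L \ x whose fundamental circuit C (with x ∈ C ⊆ B ∪ {x}) has size at least 3, L / x has a basis of weight at least w(B)/2. -/
open Set

namespace MatroidSecretary

variable {α : Type*}

/-- for any basis `B` of `L \ x` whose fundamental circuit with respect
to `x` has size at least 3, the contraction `L / x` has a basis of weight at least
`w(B)/2`. -/
theorem opt_contract_ge_half (L : Matroid α) [L.Finite] (x : α)
    (hx : x ∈ L.E) (hxnl : L.Indep {x})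
    (w : α → ℝ) (hw : ∀ e, 0 ≤ w e)
    (B C : Set α) (hB : (delete L {x}).IsBase B)
    (hC : Circuit L C) (hxC : x ∈ C) (hCB : C ⊆ insert x B) (hCcard : 3 ≤ C.ncard) :
    ∃ B', (contract L {x}).IsBase B' ∧ wt w B / 2 ≤ wt w B' := by
  have hXE : L.E \ {x} ⊆ L.E := diff_subset
  have hBbasis : L.IsBasis B (L.E \ {x}) := (Matroid.isBase_restrict_iff hXE).mp hB
  have hBindep : L.Indep B := hBbasis.indep
  have hBX : B ⊆ L.E \ {x} := hBbasis.subset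
  have hBE : B ⊆ L.E := hBindep.subset_ground
  have hxB : x ∉ B := fun h => (hBX h).2 rfl
  have hBfin : B.Finite := L.set_finite B hBE
  have hCE : C ⊆ L.E := hC.1.subset_ground
  have hCfin : C.Finite := L.set_finite C hCE
  -- B is a base of L
  have hdep : L.Dep (insert x B) := hC.1.superset hCB (insert_subset hx hBE)
  have hxcl : x ∈ L.closure B := ((hBindep.insert_dep_iff).mp hdep).1
  have hBbase : L.IsBase B := by
    refine hBindep.isBase_of_ground_subset_closure ?_
    intro e he
    rcases eq_or_ne e x with rfl | hne
    · exact hxcl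
    · have h1 : e ∈ L.E \ {x} := ⟨he, hne⟩
      have h2 := (L.subset_closure (L.E \ {x}) hXE) h1
      rwa [← hBbasis.closure_eq_closure] at h2
  -- membership helper
  have hmemB : ∀ y ∈ C \ {x}, y ∈ B := by
    intro y hy
    rcases hCB hy.1 with rfl | h
    · exact absurd rfl hy.2
    · exact h
  -- key: for y in C \ {x}, insert x (B \ {y}) is a base of L
  have key : ∀ y ∈ C \ {x}, L.IsBase (insert x (B \ {y})) := by
    intro y hy
    have hyB : y ∈ B := hmemB y hy
    have hBy : L.Indep (B \ {y}) := hBindep.subset diff_subset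
    have hxcl' : x ∉ L.closure (B \ {y}) := by
      intro hmem
      have hCy : L.Indep (C \ {y}) := hC.2 y hy.1
      have hyclC : y ∈ L.closure (C \ {y}) := by
        have hdepC : L.Dep (insert y (C \ {y})) := by
          rw [insert_diff_singleton, insert_eq_of_mem hy.1]; exact hC.1
        exact ((hCy.insert_dep_iff).mp hdepC).1
      have hsub : C \ {y} ⊆ L.closure (B \ {y}) := by
        intro e he
        rcases eq_or_ne e x with rfl | hne
        · exact hmem
        · have heB : e ∈ B \ {y} := ⟨hmemB e ⟨he.1, by simpa using hne⟩, he.2⟩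
          exact (L.subset_closure (B \ {y}) (diff_subset.trans hBE)) heB
      have hycl : y ∈ L.closure (B \ {y}) :=
        (Matroid.closure_subset_closure_of_subset_closure hsub) hyclC
      exact hBindep.notMem_closure_diff_of_mem hyB hycl
    have hind : L.Indep (insert x (B \ {y})) := by
      rw [hBy.insert_indep_iff]
      exact Or.inl ⟨hx, hxcl'⟩
    have heqs : insert x B \ {y} = insert x (B \ {y}) :=
      (insert_diff_singleton_comm (show x ≠ y by rintro rfl; exact hxB hyB) B).symm
    rw [← heqs] at hind
    rw [← heqs]
    exact hBbase.exchange_isBase_of_indep' hyB hxB hind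
  -- bases of L give bases of the contraction
  have toContract : ∀ B' : Set α, B' ⊆ L.E \ {x} → L.IsBase (insert x B') →
      (contract L {x}).IsBase B' := by
    intro B' hB'X hbase
    have h1 : L.IsBasis ((insert x B') ∩ {x}) {x} := by
      rw [inter_eq_right.mpr (singleton_subset_iff.mpr (mem_insert x B'))]
      exact hxnl.isBasis_self
    have h2 := hbase.compl_inter_isBasis_of_inter_isBasis h1
    have heq : (L.E \ insert x B') ∩ (L.E \ {x}) = (L.E \ {x}) \ B' := by
      ext e
      simp only [mem_inter_iff, mem_diff, mem_insert_iff, mem_singleton_iff]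
      tauto
    rw [heq] at h2
    show (Matroid.dual (Matroid.restrict (Matroid.dual L) (L.E \ {x}))).IsBase B'
    have hground : (Matroid.restrict (Matroid.dual L) (L.E \ {x})).E = L.E \ {x} := rfl
    rw [Matroid.dual_isBase_iff (by rw [hground]; exact hB'X), hground,
      Matroid.isBase_restrict_iff (show L.E \ {x} ⊆ (Matroid.dual L).E from hXE)]
    exact h2
  -- weights
  have hwt0 : ∀ S : Set α, 0 ≤ wt w S :=
    fun S => finsum_nonneg fun e => finsum_nonneg fun _ => hw e
  have hsplit : ∀ (S : Set α), S.Finite → ∀ a ∈ S, wt w S = w a + wt w (S \ {a}) := by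
    intro S hS a ha
    have hins : S = insert a (S \ {a}) := by
      rw [insert_diff_singleton, insert_eq_of_mem ha]
    have hfs := finsum_mem_insert w (show a ∉ S \ {a} from fun h => h.2 rfl) hS.diff
    rw [← hins] at hfs
    exact hfs
  -- two distinct elements of C \ {x}
  have h2card : 1 < (C \ {x}).ncard := by
    have := Set.ncard_diff_singleton_of_mem hxC
    omega
  obtain ⟨y₁, y₂, hy₁, hy₂, hne⟩ :=
    (Set.one_lt_ncard_iff hCfin.diff).mp h2card
  have final : ∀ y z, y ∈ C \ {x} → z ∈ C \ {x} → y ≠ z → w y ≤ w z →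
      ∃ B', (contract L {x}).IsBase B' ∧ wt w B / 2 ≤ wt w B' := by
    intro y z hy hz hyz hle
    refine ⟨B \ {y}, toContract _ (diff_subset.trans hBX) (key y hy), ?_⟩
    have h1 := hsplit B hBfin y (hmemB y hy)
    have hzmem : z ∈ B \ {y} :=
      ⟨hmemB z hz, fun hh => hyz (mem_singleton_iff.mp hh).symm⟩
    have h2 := hsplit (B \ {y}) hBfin.diff z hzmem
    have h3 := hwt0 ((B \ {y}) \ {z})
    linarith
  rcases le_total (w y₁) (w y₂) with h | h
  · exact final y₁ y₂ hy₁ hy₂ hne h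
  · exact final y₂ y₁ hy₂ hy₁ hne.symm h
end MatroidSecretary
end

section
/- If M is a matroid on ground set E, X ⊆ E, and λ_M(X) = 0, then every independent set of M|X remains independent in M / (E − X); in fact M / (E − X) restricted to X equals M|X. -/
open Set

namespace MatroidSecretary

variable {α : Type*}

/-! `λ_M(X) = 0` says `r(X) + r(E \ X) = r(E)`. For bases `I` of `X` and `J` of `E \ X` this gives
`|I ∪ J| ≤ r(X) + r(E \ X) = r(I ∪ J)`, so `I ∪ J` is independent. Contracting `E \ X` is
contracting its basis `J`, so every independent subset of `X` stays independent. -/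

open Matroid

lemma cast_rk_eq_eRk (M : Matroid α) [M.RankFinite] (X : Set α) :
    (rk M X : ℕ∞) = M.eRk X := by
  obtain ⟨I, hI⟩ := M.exists_isBasis' X
  have hIfin : I.Finite := hI.indep.finite
  have hmax : IsGreatest {n | ∃ J, M.Indep J ∧ J ⊆ X ∧ J.ncard = n} I.ncard := by
    refine ⟨⟨I, hI.indep, hI.subset, rfl⟩, ?_⟩
    rintro _ ⟨J, hJ, hJX, rfl⟩
    rw [← Nat.cast_le (α := ℕ∞), hJ.finite.cast_ncard_eq, hIfin.cast_ncard_eq,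
      hI.encard_eq_eRk]
    exact hJ.encard_le_eRk_of_subset hJX
  rw [rk, hmax.csSup_eq, hIfin.cast_ncard_eq, hI.encard_eq_eRk]

lemma union_indep_of_isBasis'_of_eRk_add_eRk_le {M : Matroid α} [M.RankFinite]
    {I J X Y : Set α} (hIX : M.IsBasis' I X) (hJY : M.IsBasis' J Y)
    (h : M.eRk X + M.eRk Y ≤ M.eRk (X ∪ Y)) : M.Indep (I ∪ J) := by
  refine (M.isRkFinite_set _).indep_of_encard_le_eRk ?_
  calc (I ∪ J).encard ≤ I.encard + J.encard := encard_union_le I J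
    _ = M.eRk X + M.eRk Y := by rw [hIX.encard_eq_eRk, hJY.encard_eq_eRk]
    _ ≤ M.eRk (X ∪ Y) := h
    _ = M.eRk (I ∪ J) := by
      rw [← hIX.eRk_eq_eRk_union, union_comm, ← hJY.eRk_eq_eRk_union, union_comm]

lemma contract_restrict_eq_restrict_of_eRk_add_eRk_le {M : Matroid α} [M.RankFinite]
    {X Y : Set α} (hXY : Disjoint X Y) (h : M.eRk X + M.eRk Y ≤ M.eRk (X ∪ Y)) :
    (M ／ Y) ↾ X = M ↾ X := by
  obtain ⟨J, hJ⟩ := M.exists_isBasis' Y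
  refine ext_indep rfl fun I hIX ↦ ?_
  simp only [restrict_ground_eq] at hIX
  rw [restrict_indep_iff, restrict_indep_iff, hJ.contract_indep_iff]
  refine ⟨fun ⟨⟨hIJ, _⟩, hIX⟩ ↦ ⟨hIJ.subset subset_union_left, hIX⟩, fun ⟨hI, hIX⟩ ↦ ?_⟩
  obtain ⟨I', hI', hII'⟩ := hI.subset_isBasis'_of_subset hIX
  have hI'J := union_indep_of_isBasis'_of_eRk_add_eRk_le hI' hJ h
  exact ⟨⟨hI'J.subset (union_subset_union_left J hII'), hXY.symm.mono_right hIX⟩, hIX⟩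

/-- if `λ_M(X) = 0` then every independent set of `M|X` is independent
in `M / (E \ X)`; in fact `(M / (E \ X))|X = M|X`. -/
theorem contract_eq_restrict_of_lambda_zero (M : Matroid α) [M.Finite] (X : Set α)
    (hX : X ⊆ M.E) (hlam : lambda M X = 0) :
    (∀ I, (Matroid.restrict M X).Indep I → (contract M (M.E \ X)).Indep I) ∧
      Matroid.restrict (contract M (M.E \ X)) X = Matroid.restrict M X := by
  have hrk : rk M X + rk M (M.E \ X) = rk M M.E := by
    unfold lambda at hlam; omega
  have heRk : M.eRk X + M.eRk (M.E \ X) ≤ M.eRk (X ∪ (M.E \ X)) := by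
    rw [union_sdiff_cancel hX, ← cast_rk_eq_eRk, ← cast_rk_eq_eRk, ← cast_rk_eq_eRk,
      ← Nat.cast_add, hrk]
  -- `contract M C` unfolds to Mathlib's `M ／ C`.
  have hrestrict : (contract M (M.E \ X)) ↾ X = M ↾ X :=
    contract_restrict_eq_restrict_of_eRk_add_eRk_le disjoint_sdiff_right heRk
  exact ⟨fun I hI ↦ (hrestrict ▸ hI : ((contract M (M.E \ X)) ↾ X).Indep I).of_restrict,
    hrestrict⟩
end MatroidSecretary
end
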